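/- With T compact metric, X a Hilbert space, and H(μ) = ∑_{i=1}^M R_i ∘ ω_i(μ) the Markov-type operator, H is continuous on cabv(X) equipped with the Monge–Kantorovich norm ‖μ‖_MK = sup{ |∫ f dμ| : f ∈ Lip(T,X), ‖f‖_∞ + ‖f‖_L ≤ 1 }, and ‖H(μ)‖_MK ≤ (∑_{i=1}^M ‖R_i‖(1 + r_i)) ‖μ‖_MK for all μ ∈ cabv(X). -/

import Mathlib

open MeasureTheory Filter Topology Set

noncomputable section

/-- A finite Borel partition of the whole space. -/
def IsBorelPartition {T : Type*} [MeasurableSpace T] (P : Finset (Set T)) : Prop :=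
  (∀ A ∈ P, MeasurableSet A) ∧ ((P : Set (Set T)).PairwiseDisjoint id) ∧
    ⋃₀ (P : Set (Set T)) = Set.univ

/-- Total variation of a vector measure, as an extended real. -/
def evar {T X : Type*} [MeasurableSpace T] [NormedAddCommGroup X]
    (μ : VectorMeasure T X) : ENNReal :=
  ⨆ (P : Finset (Set T)) (_ : IsBorelPartition P), ∑ A ∈ P, (‖μ A‖₊ : ENNReal)

/-- Bounded variation. -/
def BddVar {T X : Type*} [MeasurableSpace T] [NormedAddCommGroup X]
    (μ : VectorMeasure T X) : Prop := evar μ ≠ ⊤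

/-- The variational norm. -/
def varNorm {T X : Type*} [MeasurableSpace T] [NormedAddCommGroup X]
    (μ : VectorMeasure T X) : ℝ := (evar μ).toReal

/-- Composition of a bounded operator with a vector measure. -/
def opComp {T X Y 𝕜 : Type*} [MeasurableSpace T] [NontriviallyNormedField 𝕜]
    [NormedAddCommGroup X] [NormedSpace 𝕜 X] [NormedAddCommGroup Y] [NormedSpace 𝕜 Y]
    (R : X →L[𝕜] Y) (μ : VectorMeasure T X) : VectorMeasure T Y :=
  μ.mapRange R.toLinearMap.toAddMonoidHom R.continuous

/-- The Markov-type operator generated by operators `R i` and maps `ω i`. -/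
def markovH {T X 𝕜 : Type*} [MeasurableSpace T] [NontriviallyNormedField 𝕜]
    [NormedAddCommGroup X] [NormedSpace 𝕜 X] {M : ℕ}
    (R : Fin M → X →L[𝕜] X) (ω : Fin M → T → T) (μ : VectorMeasure T X) :
    VectorMeasure T X :=
  ∑ i, opComp (R i) (μ.map (ω i))

/-- Simple (finitely-valued, measurable) function. -/
def IsSimpleFn {T X : Type*} [MeasurableSpace T] (g : T → X) : Prop :=
  (Set.range g).Finite ∧ ∀ x : X, MeasurableSet (g ⁻¹' {x})

/-- Integral of a simple function against a vector measure. -/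
def simpleIntegral (𝕜 : Type*) {T X : Type*} [RCLike 𝕜] [MeasurableSpace T]
    [NormedAddCommGroup X] [InnerProductSpace 𝕜 X] (μ : VectorMeasure T X) (g : T → X) : 𝕜 :=
  ∑ᶠ x : X, (inner 𝕜 x (μ (g ⁻¹' {x})) : 𝕜)

/-- `I` is the (uniform, sesquilinear) integral of `f` with respect to `μ`. -/
def HasUIntegral (𝕜 : Type*) {T X : Type*} [RCLike 𝕜] [MeasurableSpace T]
    [NormedAddCommGroup X] [InnerProductSpace 𝕜 X] (μ : VectorMeasure T X)
    (f : T → X) (I : 𝕜) : Prop :=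
  ∀ g : ℕ → T → X, (∀ n, IsSimpleFn (g n)) → TendstoUniformly g f atTop →
    Tendsto (fun n => simpleIntegral 𝕜 μ (g n)) atTop (nhds I)

/-- The uniform integral (defaulting to `0` when it does not exist). -/
def uIntegral (𝕜 : Type*) {T X : Type*} [RCLike 𝕜] [MeasurableSpace T]
    [NormedAddCommGroup X] [InnerProductSpace 𝕜 X] (μ : VectorMeasure T X) (f : T → X) : 𝕜 :=
  letI := Classical.propDecidable
  if h : ∃ I, HasUIntegral 𝕜 μ f I then h.choose else 0

/-- The Monge–Kantorovich norm. -/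
def mkNorm (𝕜 : Type*) {T X : Type*} [RCLike 𝕜] [PseudoMetricSpace T] [MeasurableSpace T]
    [NormedAddCommGroup X] [InnerProductSpace 𝕜 X] (μ : VectorMeasure T X) : ℝ :=
  sSup {s | ∃ (f : T → X) (L : NNReal), LipschitzWith L f ∧ (∀ t, ‖f t‖ + (L : ℝ) ≤ 1) ∧
    s = ‖uIntegral 𝕜 μ f‖}

/-- The modified Monge–Kantorovich norm. -/
def mkNormStar (𝕜 : Type*) {T X : Type*} [RCLike 𝕜] [PseudoMetricSpace T] [MeasurableSpace T]
    [NormedAddCommGroup X] [InnerProductSpace 𝕜 X] (μ : VectorMeasure T X) : ℝ :=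
  sSup {s | ∃ f : T → X, LipschitzWith 1 f ∧ s = ‖uIntegral 𝕜 μ f‖}

/-- The `X`-valued Dirac measure `B ↦ δ_t(B) • x`. -/
def diracVM {T : Type*} [MeasurableSpace T] {𝕜 X : Type*} [RCLike 𝕜]
    [NormedAddCommGroup X] [NormedSpace 𝕜 X] (t : T) (x : X) : VectorMeasure T X :=
  ((Measure.dirac t).toSignedMeasure).mapRange
    { toFun := fun c : ℝ => (c : 𝕜) • x
      map_zero' := by simp
      map_add' := fun a b => by push_cast; rw [add_smul] }
    (RCLike.continuous_ofReal.smul continuous_const)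

end

/-
By the change of variables `∫ f dH(μ) = ∫ g dμ` with `g = ∑ᵢ Rᵢ* ∘ f ∘ ωᵢ` (an identity of finite
sums for simple `f`, which passes to uniform limits because simple integrals against a measure of
bounded variation are Lipschitz for the sup norm), it suffices to bound `g`. If
`‖f‖_∞ + Lip f ≤ 1`, then `‖g‖_∞ + Lip g ≤ ∑ᵢ ‖Rᵢ‖ (‖f‖_∞ + rᵢ Lip f) ≤ ∑ᵢ ‖Rᵢ‖ (1 + rᵢ) = C`,
so `g / C` is admissible in the definition of `‖μ‖_MK` and `‖∫ f dH(μ)‖ = C ‖∫ (g / C) dμ‖`.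
-/

open scoped NNReal ComplexConjugate

noncomputable section

local infixr:25 " →ₛ " => MeasureTheory.SimpleFunc

namespace MeasureTheory.SimpleFunc

variable {T X Y : Type*} [MeasurableSpace T]

theorem isSimpleFn (g : T →ₛ X) : IsSimpleFn g :=
  ⟨g.finite_range, g.measurableSet_fiber⟩

theorem coe_finset_sum [AddCommMonoid X] {ι : Type*} (s : Finset ι) (g : ι → T →ₛ X) :
    ⇑(∑ i ∈ s, g i) = ∑ i ∈ s, ⇑(g i) :=
  map_sum (⟨⟨(⇑), coe_zero⟩, coe_add⟩ : (T →ₛ X) →+ T → X) g s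

theorem vectorMeasure_preimage_finset [AddCommMonoid X] [TopologicalSpace X] [T2Space X]
    (μ : VectorMeasure T X) (g : T →ₛ Y) (F : Finset Y) :
    μ (g ⁻¹' F) = ∑ y ∈ F, μ (g ⁻¹' {y}) := by
  rw [show g ⁻¹' F = ⋃ y ∈ F, g ⁻¹' {y} by ext; simp, μ.of_biUnion_finset]
  · exact fun y _ z _ hyz => (disjoint_singleton.2 hyz).preimage g
  · exact fun y _ => g.measurableSet_fiber y

theorem isBorelPartition_fibers (g : T →ₛ Y) :
    IsBorelPartition (g.range.image fun y => g ⁻¹' {y}) := by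
  classical
  refine ⟨?_, ?_, ?_⟩
  · simp only [Finset.mem_image]
    rintro _ ⟨y, -, rfl⟩
    exact g.measurableSet_fiber y
  · rintro _ hA _ hB hAB
    simp only [Finset.coe_image, mem_image] at hA hB
    obtain ⟨y, -, rfl⟩ := hA
    obtain ⟨z, -, rfl⟩ := hB
    exact (disjoint_singleton.2 fun hyz => hAB (by rw [hyz])).preimage g
  · refine eq_univ_of_forall fun t => mem_sUnion.2 ⟨g ⁻¹' {g t}, ?_, rfl⟩
    simp

end MeasureTheory.SimpleFunc

def IsSimpleFn.toSimpleFunc {T X : Type*} [MeasurableSpace T] {g : T → X} (hg : IsSimpleFn g) :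
    T →ₛ X :=
  ⟨g, hg.2, hg.1⟩

@[simp]
theorem IsSimpleFn.coe_toSimpleFunc {T X : Type*} [MeasurableSpace T] {g : T → X}
    (hg : IsSimpleFn g) : ⇑hg.toSimpleFunc = g :=
  rfl

section Variation

variable {T X Y : Type*} [MeasurableSpace T] [NormedAddCommGroup X] {μ : VectorMeasure T X}

theorem varNorm_nonneg (μ : VectorMeasure T X) : 0 ≤ varNorm μ :=
  ENNReal.toReal_nonneg

theorem IsBorelPartition.sum_norm_le_varNorm (hμ : BddVar μ) {P : Finset (Set T)}
    (hP : IsBorelPartition P) : ∑ A ∈ P, ‖μ A‖ ≤ varNorm μ := by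
  have h : ∑ A ∈ P, (‖μ A‖₊ : ENNReal) ≤ evar μ :=
    le_iSup₂ (f := fun P (_ : IsBorelPartition P) => ∑ A ∈ P, (‖μ A‖₊ : ENNReal)) P hP
  simpa [varNorm, ENNReal.toReal_sum] using ENNReal.toReal_mono hμ h

theorem MeasureTheory.SimpleFunc.sum_norm_preimage_le_varNorm (hμ : BddVar μ) (g : T →ₛ Y) :
    ∑ y ∈ g.range, ‖μ (g ⁻¹' {y})‖ ≤ varNorm μ := by
  classical
  have hinj : Set.InjOn (fun y => g ⁻¹' {y}) g.range := by
    intro y hy z _ hyz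
    obtain ⟨t, rfl⟩ := g.mem_range.1 hy
    exact (Set.ext_iff.1 hyz t).1 rfl
  simpa [Finset.sum_image hinj] using g.isBorelPartition_fibers.sum_norm_le_varNorm hμ

end Variation

section SimpleIntegral

variable {T X Y 𝕜 : Type*} [MeasurableSpace T] [RCLike 𝕜] [NormedAddCommGroup X]
  [InnerProductSpace 𝕜 X] (μ : VectorMeasure T X)

theorem sum_inner_preimage_of_range_subset (g : T →ₛ Y) (φ : Y → X) {s : Finset Y}
    (hs : g.range ⊆ s) :
    ∑ y ∈ s, inner 𝕜 (φ y) (μ (g ⁻¹' {y})) = ∑ y ∈ g.range, inner 𝕜 (φ y) (μ (g ⁻¹' {y})) := by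
  refine (Finset.sum_subset hs fun y _ hy => ?_).symm
  rw [preimage_singleton_eq_empty.2 (by simpa using hy), μ.empty, inner_zero_right]

theorem simpleIntegral_eq_sum (g : T →ₛ X) :
    simpleIntegral 𝕜 μ g = ∑ x ∈ g.range, inner 𝕜 x (μ (g ⁻¹' {x})) := by
  refine finsum_eq_sum_of_support_subset _ fun x hx => ?_
  by_contra hxg
  rw [Function.mem_support, preimage_singleton_eq_empty.2 (by simpa using hxg), μ.empty,
    inner_zero_right] at hx
  exact hx rfl

theorem simpleIntegral_map (g : T →ₛ Y) (φ : Y → X) :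
    simpleIntegral 𝕜 μ (g.map φ) = ∑ y ∈ g.range, inner 𝕜 (φ y) (μ (g ⁻¹' {y})) := by
  classical
  rw [simpleIntegral_eq_sum, SimpleFunc.range_map]
  refine Finset.sum_image' _ fun y _ => ?_
  rw [SimpleFunc.map_preimage_singleton, g.vectorMeasure_preimage_finset, inner_sum]
  exact Finset.sum_congr rfl fun z hz => by rw [(Finset.mem_filter.1 hz).2]

theorem simpleIntegral_add (g h : T →ₛ X) :
    simpleIntegral 𝕜 μ ⇑(g + h) = simpleIntegral 𝕜 μ g + simpleIntegral 𝕜 μ h := by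
  have hg := simpleIntegral_map (𝕜 := 𝕜) μ (g.pair h) Prod.fst
  have hh := simpleIntegral_map (𝕜 := 𝕜) μ (g.pair h) Prod.snd
  rw [SimpleFunc.map_fst_pair] at hg
  rw [SimpleFunc.map_snd_pair] at hh
  rw [SimpleFunc.add_eq_map₂, simpleIntegral_map, hg, hh]
  simp only [inner_add_left, Finset.sum_add_distrib]

theorem simpleIntegral_smul (c : 𝕜) (g : T →ₛ X) :
    simpleIntegral 𝕜 μ ⇑(c • g) = conj c * simpleIntegral 𝕜 μ g := by
  rw [SimpleFunc.smul_eq_map, simpleIntegral_map, simpleIntegral_eq_sum, Finset.mul_sum]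
  simp only [inner_smul_left]

@[simps]
def simpleIntegralₗ : (T →ₛ X) →ₗ⋆[𝕜] 𝕜 where
  toFun g := simpleIntegral 𝕜 μ g
  map_add' := simpleIntegral_add μ
  map_smul' := simpleIntegral_smul μ

variable {μ}

theorem norm_simpleIntegral_le (hμ : BddVar μ) (g : T →ₛ X) {B : ℝ} (hB : 0 ≤ B)
    (hg : ∀ t, ‖g t‖ ≤ B) : ‖simpleIntegral 𝕜 μ g‖ ≤ B * varNorm μ := by
  rw [simpleIntegral_eq_sum]
  calc ‖∑ x ∈ g.range, inner 𝕜 x (μ (g ⁻¹' {x}))‖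
      ≤ ∑ x ∈ g.range, B * ‖μ (g ⁻¹' {x})‖ := by
        refine (norm_sum_le _ _).trans (Finset.sum_le_sum fun x hx => ?_)
        obtain ⟨t, rfl⟩ := g.mem_range.1 hx
        exact (norm_inner_le_norm _ _).trans (by gcongr; exact hg t)
    _ ≤ B * varNorm μ := by
        rw [← Finset.mul_sum]
        exact mul_le_mul_of_nonneg_left (g.sum_norm_preimage_le_varNorm hμ) hB

theorem tendsto_simpleIntegral_zero (hμ : BddVar μ) {ι : Type*} {l : Filter ι}
    {g : ι → T →ₛ X} (hg : TendstoUniformly (fun n => ⇑(g n)) 0 l) :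
    Tendsto (fun n => simpleIntegral 𝕜 μ (g n)) l (𝓝 0) := by
  rw [NormedAddGroup.tendsto_nhds_zero]
  intro ε hε
  have hV := varNorm_nonneg μ
  have hδ : 0 < ε / (varNorm μ + 1) := by positivity
  filter_upwards [Metric.tendstoUniformly_iff.1 hg _ hδ] with n hn
  calc ‖simpleIntegral 𝕜 μ (g n)‖ ≤ ε / (varNorm μ + 1) * varNorm μ :=
        norm_simpleIntegral_le hμ (g n) hδ.le fun t => by simpa using (hn t).le
    _ < ε := by
        rw [div_mul_eq_mul_div, div_lt_iff₀ (by positivity)]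
        nlinarith

theorem hasUIntegral_of_tendsto (hμ : BddVar μ) {f : T → X} {q : ℕ → T →ₛ X}
    (hq : TendstoUniformly (fun n => ⇑(q n)) f atTop) {I : 𝕜}
    (hI : Tendsto (fun n => simpleIntegral 𝕜 μ (q n)) atTop (𝓝 I)) :
    HasUIntegral 𝕜 μ f I := by
  intro g hg hgf
  have hdiff : TendstoUniformly (fun n => ⇑((hg n).toSimpleFunc - q n)) 0 atTop := by
    convert hgf.sub hq using 1 <;> ext <;> simp
  have h := (tendsto_simpleIntegral_zero hμ hdiff).add hI
  rw [zero_add] at h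
  refine h.congr fun n => ?_
  have hsub := map_sub (simpleIntegralₗ (𝕜 := 𝕜) μ) (hg n).toSimpleFunc (q n)
  simp only [simpleIntegralₗ_apply, IsSimpleFn.coe_toSimpleFunc] at hsub
  rw [hsub, sub_add_cancel]

end SimpleIntegral

section Approximation

variable {T X : Type*} [PseudoMetricSpace T] [MeasurableSpace T] [OpensMeasurableSpace T]
  [PseudoMetricSpace X] [Nonempty X] {f : T → X} {δ ε : ℝ}

theorem exists_simpleFunc_dist_lt_on_biUnion_ball
    (hf : ∀ s t, dist s t < δ → dist (f s) (f t) < ε) (c : Finset T) :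
    ∃ g : T →ₛ X, ∀ t ∈ ⋃ x ∈ c, Metric.ball x δ, dist (f t) (g t) < ε := by
  classical
  induction c using Finset.induction_on with
  | empty => exact ⟨SimpleFunc.const T (Classical.arbitrary X), by simp⟩
  | insert a c _ ih =>
    obtain ⟨g, hg⟩ := ih
    refine ⟨SimpleFunc.piecewise (Metric.ball a δ) Metric.isOpen_ball.measurableSet
      (SimpleFunc.const T (f a)) g, fun t ht => ?_⟩
    rw [SimpleFunc.piecewise_apply]
    split_ifs with hta
    · exact hf t a hta
    · rw [Finset.set_biUnion_insert] at ht
      exact hg t (ht.resolve_left hta)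

variable [CompactSpace T]

theorem Continuous.exists_simpleFunc_dist_lt (hf : Continuous f) (hε : 0 < ε) :
    ∃ g : T →ₛ X, ∀ t, dist (f t) (g t) < ε := by
  obtain ⟨δ, hδ, hfδ⟩ :=
    Metric.uniformContinuous_iff.1 (CompactSpace.uniformContinuous_of_continuous hf) ε hε
  obtain ⟨c, -, hc, hcover⟩ := (isCompact_univ (X := T)).finite_cover_balls hδ
  obtain ⟨g, hg⟩ := exists_simpleFunc_dist_lt_on_biUnion_ball (fun s t h => hfδ h) hc.toFinset
  exact ⟨g, fun t => hg t (by simpa using hcover (mem_univ t))⟩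

theorem Continuous.exists_simpleFunc_tendstoUniformly (hf : Continuous f) :
    ∃ g : ℕ → T →ₛ X, TendstoUniformly (fun n => ⇑(g n)) f atTop := by
  choose g hg using fun n : ℕ => hf.exists_simpleFunc_dist_lt (Nat.one_div_pos_of_nat (n := n))
  refine ⟨g, Metric.tendstoUniformly_iff.2 fun ε hε => ?_⟩
  obtain ⟨N, hN⟩ := exists_nat_one_div_lt hε
  filter_upwards [eventually_ge_atTop N] with n hn t
  exact (hg n t).trans_le ((Nat.one_div_le_one_div hn).trans hN.le)

end Approximation

section UniformIntegral

variable {T X 𝕜 : Type*} [PseudoMetricSpace T] [CompactSpace T] [MeasurableSpace T]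
  [OpensMeasurableSpace T] [RCLike 𝕜] [NormedAddCommGroup X] [InnerProductSpace 𝕜 X]
  {μ : VectorMeasure T X} {f : T → X} {I : 𝕜}

theorem HasUIntegral.unique (hf : Continuous f) (hI : HasUIntegral 𝕜 μ f I) {J : 𝕜}
    (hJ : HasUIntegral 𝕜 μ f J) : I = J := by
  obtain ⟨g, hg⟩ := hf.exists_simpleFunc_tendstoUniformly
  exact tendsto_nhds_unique (hI _ (fun n => (g n).isSimpleFn) hg)
    (hJ _ (fun n => (g n).isSimpleFn) hg)

theorem HasUIntegral.uIntegral_eq (hf : Continuous f) (hI : HasUIntegral 𝕜 μ f I) :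
    uIntegral 𝕜 μ f = I := by
  have hex : ∃ J, HasUIntegral 𝕜 μ f J := ⟨I, hI⟩
  rw [uIntegral, dif_pos hex]
  exact hex.choose_spec.unique hf hI

theorem norm_uIntegral_le (hf : Continuous f) {b : ℝ}
    (h : ∀ I, HasUIntegral 𝕜 μ f I → ‖I‖ ≤ b) (hb : 0 ≤ b) : ‖uIntegral 𝕜 μ f‖ ≤ b := by
  by_cases hex : ∃ I, HasUIntegral 𝕜 μ f I
  · obtain ⟨I, hI⟩ := hex
    rw [hI.uIntegral_eq hf]
    exact h I hI
  · rwa [uIntegral, dif_neg hex, norm_zero]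

theorem HasUIntegral.const_smul (hμ : BddVar μ) (hf : Continuous f) (hI : HasUIntegral 𝕜 μ f I)
    (c : 𝕜) : HasUIntegral 𝕜 μ (fun t => c • f t) (conj c * I) := by
  obtain ⟨g, hg⟩ := hf.exists_simpleFunc_tendstoUniformly
  refine hasUIntegral_of_tendsto hμ (q := fun n => c • g n)
    ((uniformContinuous_const_smul c).comp_tendstoUniformly hg) ?_
  simpa only [← simpleIntegralₗ_apply, map_smulₛₗ, smul_eq_mul]
    using (hI _ (fun n => (g n).isSimpleFn) hg).const_mul (conj c)

theorem HasUIntegral.norm_le (hμ : BddVar μ) (hf : Continuous f) (hI : HasUIntegral 𝕜 μ f I)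
    {B : ℝ} (hB : 0 ≤ B) (hfB : ∀ t, ‖f t‖ ≤ B) : ‖I‖ ≤ B * varNorm μ := by
  obtain ⟨g, hg⟩ := hf.exists_simpleFunc_tendstoUniformly
  have hlim := (hI _ (fun n => (g n).isSimpleFn) hg).norm
  have hε : ∀ ε > 0, ‖I‖ ≤ (B + ε) * varNorm μ := fun ε hε => by
    refine le_of_tendsto hlim ?_
    filter_upwards [Metric.tendstoUniformly_iff.1 hg ε hε] with n hn
    refine norm_simpleIntegral_le hμ (g n) (by positivity) fun t => ?_
    calc ‖g n t‖ ≤ ‖f t‖ + dist (f t) (g n t) := by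
          rw [dist_eq_norm']
          exact norm_le_insert' _ _
      _ ≤ B + ε := add_le_add (hfB t) (hn t).le
  have hBε : Tendsto (fun ε => (B + ε) * varNorm μ) (𝓝[>] 0) (𝓝 ((B + 0) * varNorm μ)) :=
    ((tendsto_const_nhds.add tendsto_id).mul tendsto_const_nhds).mono_left nhdsWithin_le_nhds
  simpa using ge_of_tendsto hBε (eventually_nhdsWithin_of_forall hε)

end UniformIntegral

section MongeKantorovich

variable {T X 𝕜 : Type*} [PseudoMetricSpace T] [MeasurableSpace T] [RCLike 𝕜]
  [NormedAddCommGroup X] [InnerProductSpace 𝕜 X] {μ : VectorMeasure T X} {f : T → X} {I : 𝕜}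

theorem mkNorm_nonneg (μ : VectorMeasure T X) : 0 ≤ mkNorm 𝕜 μ :=
  Real.sSup_nonneg (by rintro _ ⟨f, L, -, -, rfl⟩; exact norm_nonneg _)

variable [CompactSpace T] [OpensMeasurableSpace T]

theorem norm_uIntegral_le_mkNorm (hμ : BddVar μ) {L : ℝ≥0} (hf : LipschitzWith L f)
    (hfL : ∀ t, ‖f t‖ + L ≤ 1) : ‖uIntegral 𝕜 μ f‖ ≤ mkNorm 𝕜 μ := by
  refine le_csSup ⟨varNorm μ, ?_⟩ ⟨f, L, hf, hfL, rfl⟩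
  rintro _ ⟨g, K, hg, hgK, rfl⟩
  refine norm_uIntegral_le (𝕜 := 𝕜) hg.continuous (fun I hI => ?_) (varNorm_nonneg μ)
  simpa using hI.norm_le hμ hg.continuous zero_le_one fun t => by linarith [hgK t, K.coe_nonneg]

theorem HasUIntegral.norm_le_mul_mkNorm (hμ : BddVar μ) (hI : HasUIntegral 𝕜 μ f I) {K : ℝ≥0}
    (hf : LipschitzWith K f) {C : ℝ} (hC : 0 ≤ C) (hfC : ∀ t, ‖f t‖ + K ≤ C) :
    ‖I‖ ≤ C * mkNorm 𝕜 μ := by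
  rcases hC.eq_or_lt with rfl | hC
  · simpa using hI.norm_le hμ hf.continuous le_rfl fun t => by linarith [hfC t, K.coe_nonneg]
  set c : 𝕜 := ((C⁻¹ : ℝ) : 𝕜)
  have hc : ‖c‖ = C⁻¹ := by simp [c, hC.le]
  have hcf : LipschitzWith (‖c‖₊ * K) (fun t => c • f t) := (lipschitzWith_smul c).comp hf
  have hcfC : ∀ t, ‖c • f t‖ + ↑(‖c‖₊ * K) ≤ 1 := fun t => by
    rw [norm_smul, NNReal.coe_mul, coe_nnnorm, hc, ← mul_add]
    calc C⁻¹ * (‖f t‖ + K) ≤ C⁻¹ * C := by gcongr; exact hfC t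
      _ = 1 := inv_mul_cancel₀ hC.ne'
  have h := norm_uIntegral_le_mkNorm (𝕜 := 𝕜) hμ hcf hcfC
  rw [(hI.const_smul hμ hf.continuous c).uIntegral_eq hcf.continuous,
    norm_mul, RCLike.norm_conj, hc] at h
  calc ‖I‖ = C * (C⁻¹ * ‖I‖) := by field_simp
    _ ≤ C * mkNorm 𝕜 μ := by gcongr

end MongeKantorovich

theorem markovH_apply {T X 𝕜 : Type*} [MeasurableSpace T] [NontriviallyNormedField 𝕜]
    [NormedAddCommGroup X] [NormedSpace 𝕜 X] {M : ℕ} (R : Fin M → X →L[𝕜] X)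
    {ω : Fin M → T → T} (μ : VectorMeasure T X) (hω : ∀ i, Measurable (ω i)) {s : Set T}
    (hs : MeasurableSet s) : markovH R ω μ s = ∑ i, R i (μ (ω i ⁻¹' s)) := by
  simp only [markovH, opComp, FunLike.coe_sum, Finset.sum_apply]
  exact Finset.sum_congr rfl fun i _ => congrArg (R i) (VectorMeasure.map_apply μ (hω i) hs)

section Markov

variable {T X 𝕜 : Type*} [RCLike 𝕜] [NormedAddCommGroup X] [InnerProductSpace 𝕜 X]
  [CompleteSpace X] {M : ℕ} (R : Fin M → X →L[𝕜] X)

def markovAdjoint (ω : Fin M → T → T) (f : T → X) : T → X :=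
  fun t => ∑ i, ContinuousLinearMap.adjoint (R i) (f (ω i t))

variable {R} {ω : Fin M → T → T}

theorem norm_markovAdjoint_sub_le (f f' : T → X) (s t : T) :
    ‖markovAdjoint R ω f s - markovAdjoint R ω f' t‖ ≤ ∑ i, ‖R i‖ * ‖f (ω i s) - f' (ω i t)‖ := by
  simp only [markovAdjoint, ← Finset.sum_sub_distrib, ← map_sub]
  refine (norm_sum_le _ _).trans (Finset.sum_le_sum fun i _ => ?_)
  simpa using (ContinuousLinearMap.adjoint (R i)).le_opNorm (f (ω i s) - f' (ω i t))

theorem norm_markovAdjoint_le (f : T → X) (t : T) :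
    ‖markovAdjoint R ω f t‖ ≤ ∑ i, ‖R i‖ * ‖f (ω i t)‖ := by
  simpa [markovAdjoint] using norm_markovAdjoint_sub_le (R := R) (ω := ω) f 0 t t

theorem norm_markovAdjoint_add_le {r : Fin M → ℝ≥0} {L : ℝ≥0} {f : T → X}
    (hfL : ∀ t, ‖f t‖ + L ≤ 1) (t : T) :
    ‖markovAdjoint R ω f t‖ + ↑(∑ i, ‖R i‖₊ * (L * r i)) ≤ ∑ i, ‖R i‖ * (1 + (r i : ℝ)) := by
  push_cast
  refine (add_le_add (norm_markovAdjoint_le (R := R) (ω := ω) f t) le_rfl).trans ?_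
  rw [← Finset.sum_add_distrib]
  refine Finset.sum_le_sum fun i _ => ?_
  have hf := hfL (ω i t)
  have hL : (L : ℝ) ≤ 1 := by linarith [norm_nonneg (f (ω i t))]
  rw [← mul_add]
  exact mul_le_mul_of_nonneg_left (by nlinarith [(r i).coe_nonneg]) (norm_nonneg _)

theorem LipschitzWith.markovAdjoint [PseudoMetricSpace T] {r : Fin M → ℝ≥0}
    (hω : ∀ i, LipschitzWith (r i) (ω i)) {L : ℝ≥0} {f : T → X} (hf : LipschitzWith L f) :
    LipschitzWith (∑ i, ‖R i‖₊ * (L * r i)) (markovAdjoint R ω f) := by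
  refine LipschitzWith.of_dist_le_mul fun s t => ?_
  rw [dist_eq_norm]
  refine (norm_markovAdjoint_sub_le f f s t).trans ?_
  push_cast
  rw [Finset.sum_mul]
  refine Finset.sum_le_sum fun i _ => ?_
  rw [← dist_eq_norm, mul_assoc]
  gcongr
  exact (hf.comp (hω i)).dist_le_mul s t

theorem TendstoUniformly.markovAdjoint {ι : Type*} {l : Filter ι} {g : ι → T → X} {f : T → X}
    (hg : TendstoUniformly g f l) :
    TendstoUniformly (fun n => markovAdjoint R ω (g n)) (markovAdjoint R ω f) l := by
  rw [Metric.tendstoUniformly_iff] at hg ⊢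
  intro ε hε
  set S := ∑ i, ‖R i‖
  have hS : 0 ≤ S := by positivity
  have hδ : 0 < ε / (S + 1) := by positivity
  filter_upwards [hg _ hδ] with n hn t
  rw [dist_eq_norm]
  calc _ ≤ ∑ i, ‖R i‖ * ‖f (ω i t) - g n (ω i t)‖ := norm_markovAdjoint_sub_le f (g n) t t
    _ ≤ ∑ i, ‖R i‖ * (ε / (S + 1)) := by
        gcongr with i
        rw [← dist_eq_norm]
        exact (hn _).le
    _ < ε := by
        rw [← Finset.sum_mul, mul_div_assoc', div_lt_iff₀ (by positivity)]
        nlinarith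

variable [MeasurableSpace T]

variable (R) in
def MeasureTheory.SimpleFunc.markovAdjoint (hω : ∀ i, Measurable (ω i)) (g : T →ₛ X) : T →ₛ X :=
  ∑ i, (g.comp (ω i) (hω i)).map (ContinuousLinearMap.adjoint (R i))

theorem MeasureTheory.SimpleFunc.coe_markovAdjoint (hω : ∀ i, Measurable (ω i)) (g : T →ₛ X) :
    ⇑(g.markovAdjoint R hω) = _root_.markovAdjoint R ω g := by
  ext t
  simp [SimpleFunc.markovAdjoint, _root_.markovAdjoint, SimpleFunc.coe_finset_sum]

theorem simpleIntegral_markovH (μ : VectorMeasure T X) (hω : ∀ i, Measurable (ω i))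
    (g : T →ₛ X) :
    simpleIntegral 𝕜 (markovH R ω μ) g = simpleIntegral 𝕜 μ (markovAdjoint R ω g) := by
  rw [← SimpleFunc.coe_markovAdjoint hω, SimpleFunc.markovAdjoint, simpleIntegral_eq_sum]
  conv_rhs => rw [← simpleIntegralₗ_apply, map_sum]
  simp only [markovH_apply R μ hω (g.measurableSet_fiber _), inner_sum]
  rw [Finset.sum_comm]
  refine Finset.sum_congr rfl fun i _ => ?_
  rw [simpleIntegralₗ_apply, simpleIntegral_map,
    ← sum_inner_preimage_of_range_subset μ _ _ (g.range_comp_subset_range (hω i))]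
  simp [ContinuousLinearMap.adjoint_inner_left, preimage_comp]

end Markov

theorem HasUIntegral.markovAdjoint {T X 𝕜 : Type*} [PseudoMetricSpace T] [CompactSpace T]
    [MeasurableSpace T] [OpensMeasurableSpace T] [RCLike 𝕜] [NormedAddCommGroup X]
    [InnerProductSpace 𝕜 X] [CompleteSpace X] {M : ℕ} {R : Fin M → X →L[𝕜] X}
    {ω : Fin M → T → T} {μ : VectorMeasure T X} {f : T → X} {I : 𝕜} (hμ : BddVar μ)
    (hω : ∀ i, Measurable (ω i)) (hf : Continuous f)
    (hI : HasUIntegral 𝕜 (markovH R ω μ) f I) : HasUIntegral 𝕜 μ (markovAdjoint R ω f) I := by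
  obtain ⟨g, hg⟩ := hf.exists_simpleFunc_tendstoUniformly
  refine hasUIntegral_of_tendsto hμ (q := fun n => (g n).markovAdjoint R hω) ?_ ?_
  · simpa only [SimpleFunc.coe_markovAdjoint] using hg.markovAdjoint
  · simpa only [simpleIntegral_markovH μ hω, SimpleFunc.coe_markovAdjoint]
      using hI _ (fun n => (g n).isSimpleFn) hg

end

/-- the Markov-type operator is continuous for the Monge–Kantorovich norm:
`‖H(μ)‖_MK ≤ (∑ ‖R_i‖ (1 + r_i)) ‖μ‖_MK`. -/
theorem markovH_mkNorm_bound
    {T : Type*} [MetricSpace T] [CompactSpace T] [MeasurableSpace T] [BorelSpace T]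
    {𝕜 X : Type*} [RCLike 𝕜] [NormedAddCommGroup X] [InnerProductSpace 𝕜 X] [CompleteSpace X]
    {M : ℕ} (ω : Fin M → T → T) (r : Fin M → NNReal)
    (hω : ∀ i, LipschitzWith (r i) (ω i)) (R : Fin M → X →L[𝕜] X)
    (μ : VectorMeasure T X) (hμ : BddVar μ) :
    mkNorm 𝕜 (markovH R ω μ) ≤ (∑ i, ‖R i‖ * (1 + (r i : ℝ))) * mkNorm 𝕜 μ := by
  have hC : 0 ≤ ∑ i, ‖R i‖ * (1 + (r i : ℝ)) := by positivity
  refine Real.sSup_le ?_ (mul_nonneg hC (mkNorm_nonneg μ))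
  rintro _ ⟨f, L, hf, hfL, rfl⟩
  refine norm_uIntegral_le hf.continuous (fun I hI => ?_) (mul_nonneg hC (mkNorm_nonneg μ))
  have hIμ := hI.markovAdjoint hμ (fun i => (hω i).continuous.measurable) hf.continuous
  exact hIμ.norm_le_mul_mkNorm hμ (hf.markovAdjoint hω) hC (norm_markovAdjoint_add_le hfL)
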